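/- Let n ≥ 2 and let 2 ≤ b < m be integers. Let e₁ and e₂ be the first two standard basis vectors of ℝ^n, set λ = √( b(b−1) / ((m−b) + (m−b)²) ), and define ω₁ = −(b−1)·e₁, ω_ℓ = e₁ for 2 ≤ ℓ ≤ b, ω_ℓ = λ·e₂ for b+1 ≤ ℓ ≤ m, and ω₀ = (b−m)·λ·e₂. Then for every subset S ⊆ {1,…,m}: if Σ_{ℓ∈S} ω_ℓ = Σ_{ℓ∉S} ω_ℓ + ω₀ and Σ_{ℓ∈S} ‖ω_ℓ‖² = Σ_{ℓ∉S} ‖ω_ℓ‖² + ‖ω₀‖², then S = {1,…,b}. -/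

import Mathlib

/-!
The vectors `ω 1, …, ω m` and `ω 0` sum to zero, so the vector condition says exactly that
`∑ ℓ ∈ S, ω ℓ = 0`. Its `e₂`-component is `λ · #(S ∩ {b+1, …, m})`, which forces
`S ⊆ {1, …, b}`; its `e₁`-component is then `#S - b · [1 ∈ S]`, which leaves only `S = ∅` and
`S = {1, …, b}`. The empty set fails the norm condition, whose right-hand side is then positive.
-/

open Finset
open scoped InnerProductSpace

namespace Finset

theorem sum_eq_sum_sdiff_add_iff_two_nsmul_sum_eq {ι M : Type*} [AddCommGroup M] [DecidableEq ι]
    {S T : Finset ι} (hST : S ⊆ T) (f : ι → M) (c : M) :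
    ∑ i ∈ S, f i = ∑ i ∈ T \ S, f i + c ↔ 2 • ∑ i ∈ S, f i = ∑ i ∈ T, f i + c := by
  rw [← sum_sdiff hST, two_nsmul, add_right_comm _ _ c, add_left_inj]

theorem sum_Icc_one_eq_add_sum_Icc_add_sum_Icc {M : Type*} [AddCommMonoid M] (f : ℕ → M)
    {b m : ℕ} (hb : 1 ≤ b) (hbm : b ≤ m) :
    ∑ ℓ ∈ Icc 1 m, f ℓ = f 1 + ∑ ℓ ∈ Icc 2 b, f ℓ + ∑ ℓ ∈ Icc (b + 1) m, f ℓ := by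
  rw [Icc_eq_cons_Ioc (hb.trans hbm), sum_cons, ← sum_Ioc_consecutive f hb hbm, add_assoc,
    ← Icc_add_one_left_eq_Ioc, ← Icc_add_one_left_eq_Ioc]
  rfl

theorem subset_of_sum_eq_zero_of_nonneg {ι N : Type*} [AddCommMonoid N] [PartialOrder N]
    [AddLeftMono N] {S U : Finset ι} {g : ι → N} (hg : ∀ i ∈ S, 0 ≤ g i)
    (hpos : ∀ i ∈ S, i ∉ U → 0 < g i) (hsum : ∑ i ∈ S, g i = 0) : S ⊆ U := by
  intro i hi
  by_contra hiU
  exact (hpos i hi hiU).ne' ((sum_eq_zero_iff_of_nonneg hg).1 hsum i hi)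

theorem eq_empty_or_eq_Icc_one_of_sum_eq_zero {R : Type*} [Ring R] [CharZero R]
    {S : Finset ℕ} {b : ℕ} {f : ℕ → R} (hS : S ⊆ Icc 1 b) (h1 : f 1 = 1 - b)
    (hf : ∀ ℓ ∈ Icc 2 b, f ℓ = 1) (hsum : ∑ ℓ ∈ S, f ℓ = 0) : S = ∅ ∨ S = Icc 1 b := by
  have hfS : ∀ ℓ ∈ S, f ℓ = 1 - if ℓ = 1 then (b : R) else 0 := by
    intro ℓ hℓ
    split_ifs with hℓ1
    · rw [hℓ1, h1]
    · obtain ⟨h1ℓ, hℓb⟩ := mem_Icc.1 (hS hℓ)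
      rw [hf ℓ (mem_Icc.2 ⟨by omega, hℓb⟩), sub_zero]
  rw [sum_congr rfl hfS, sum_sub_distrib, sum_const, nsmul_one, sum_ite_eq', sub_eq_zero] at hsum
  split_ifs at hsum with h1S
  · right
    refine eq_of_subset_of_card_le hS ?_
    rw [Nat.card_Icc, Nat.add_sub_cancel]
    exact (by exact_mod_cast hsum : #S = b).ge
  · left
    exact card_eq_zero.1 (by exact_mod_cast hsum)

end Finset

section ExplicitFrequencies

theorem sum_Icc_one_add_eq_zero_of_explicit_frequencies {E : Type*} [AddCommGroup E]
    [Module ℝ E] {b m : ℕ} {e₁ e₂ : E} {lam : ℝ} {ω : ℕ → E} (hb : 1 ≤ b) (hbm : b ≤ m)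
    (hω1 : ω 1 = (-((b : ℝ) - 1)) • e₁) (hωmid : ∀ ℓ, 2 ≤ ℓ → ℓ ≤ b → ω ℓ = e₁)
    (hωtail : ∀ ℓ, b + 1 ≤ ℓ → ℓ ≤ m → ω ℓ = lam • e₂)
    (hω0 : ω 0 = (((b : ℝ) - (m : ℝ)) * lam) • e₂) :
    ∑ ℓ ∈ Icc 1 m, ω ℓ + ω 0 = 0 := by
  rw [sum_Icc_one_eq_add_sum_Icc_add_sum_Icc ω hb hbm,
    sum_congr rfl fun ℓ hℓ => hωmid ℓ (mem_Icc.1 hℓ).1 (mem_Icc.1 hℓ).2,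
    sum_congr rfl fun ℓ hℓ => hωtail ℓ (mem_Icc.1 hℓ).1 (mem_Icc.1 hℓ).2,
    sum_const, sum_const, Nat.card_Icc, Nat.card_Icc, hω1, hω0,
    ← Nat.cast_smul_eq_nsmul ℝ, ← Nat.cast_smul_eq_nsmul ℝ, Nat.cast_sub (by omega),
    Nat.cast_sub (by omega)]
  push_cast
  module

variable {E : Type*} [NormedAddCommGroup E] [InnerProductSpace ℝ E] {b m : ℕ} {e₁ e₂ : E}
  {lam : ℝ} {ω : ℕ → E}

theorem inner_explicit_frequency_eq_ite (he₂ : ‖e₂‖ = 1) (he₁₂ : ⟪e₂, e₁⟫_ℝ = 0)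
    (hb : 1 ≤ b) (hω1 : ω 1 = (-((b : ℝ) - 1)) • e₁) (hωmid : ∀ ℓ, 2 ≤ ℓ → ℓ ≤ b → ω ℓ = e₁)
    (hωtail : ∀ ℓ, b + 1 ≤ ℓ → ℓ ≤ m → ω ℓ = lam • e₂) {ℓ : ℕ} (hℓ : ℓ ∈ Icc 1 m) :
    ⟪e₂, ω ℓ⟫_ℝ = if b < ℓ then lam else 0 := by
  obtain ⟨h1ℓ, hℓm⟩ := mem_Icc.1 hℓ
  rcases (by omega : ℓ = 1 ∨ 2 ≤ ℓ ∧ ℓ ≤ b ∨ b < ℓ) with rfl | ⟨h2ℓ, hℓb⟩ | hℓb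
  · rw [hω1, inner_smul_right, he₁₂, mul_zero, if_neg (by omega)]
  · rw [hωmid ℓ h2ℓ hℓb, he₁₂, if_neg hℓb.not_gt]
  · rw [hωtail ℓ hℓb hℓm, inner_smul_right, real_inner_self_eq_norm_sq, he₂, if_pos hℓb]
    ring

theorem subset_Icc_of_sum_explicit_frequencies_eq_zero (he₂ : ‖e₂‖ = 1)
    (he₁₂ : ⟪e₂, e₁⟫_ℝ = 0) (hb : 1 ≤ b) (hlam : 0 < lam)
    (hω1 : ω 1 = (-((b : ℝ) - 1)) • e₁) (hωmid : ∀ ℓ, 2 ≤ ℓ → ℓ ≤ b → ω ℓ = e₁)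
    (hωtail : ∀ ℓ, b + 1 ≤ ℓ → ℓ ≤ m → ω ℓ = lam • e₂) {S : Finset ℕ} (hS : S ⊆ Icc 1 m)
    (hsum : ∑ ℓ ∈ S, ω ℓ = 0) : S ⊆ Icc 1 b := by
  have hinner (ℓ : ℕ) (hℓ : ℓ ∈ S) :=
    inner_explicit_frequency_eq_ite he₂ he₁₂ hb hω1 hωmid hωtail (hS hℓ)
  refine subset_of_sum_eq_zero_of_nonneg (g := fun ℓ => ⟪e₂, ω ℓ⟫_ℝ) (fun ℓ hℓ => ?_)
    (fun ℓ hℓ hℓb => ?_) (by rw [← inner_sum, hsum, inner_zero_right])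
  · rw [hinner ℓ hℓ]
    split_ifs <;> positivity
  · have hℓm := mem_Icc.1 (hS hℓ)
    rw [hinner ℓ hℓ, if_pos (by simp only [mem_Icc] at hℓb; omega)]
    exact hlam

theorem eq_empty_or_eq_Icc_of_sum_explicit_frequencies_eq_zero (he₁ : ‖e₁‖ = 1)
    (he₂ : ‖e₂‖ = 1) (he₁₂ : ⟪e₂, e₁⟫_ℝ = 0) (hb : 1 ≤ b) (hlam : 0 < lam)
    (hω1 : ω 1 = (-((b : ℝ) - 1)) • e₁) (hωmid : ∀ ℓ, 2 ≤ ℓ → ℓ ≤ b → ω ℓ = e₁)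
    (hωtail : ∀ ℓ, b + 1 ≤ ℓ → ℓ ≤ m → ω ℓ = lam • e₂) {S : Finset ℕ} (hS : S ⊆ Icc 1 m)
    (hsum : ∑ ℓ ∈ S, ω ℓ = 0) : S = ∅ ∨ S = Icc 1 b := by
  refine eq_empty_or_eq_Icc_one_of_sum_eq_zero (f := fun ℓ => ⟪e₁, ω ℓ⟫_ℝ)
    (subset_Icc_of_sum_explicit_frequencies_eq_zero he₂ he₁₂ hb hlam hω1 hωmid hωtail hS hsum)
    ?_ (fun ℓ hℓ => ?_) (by rw [← inner_sum, hsum, inner_zero_right])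
  · rw [hω1, inner_smul_right, real_inner_self_eq_norm_sq, he₁]
    ring
  · rw [hωmid ℓ (mem_Icc.1 hℓ).1 (mem_Icc.1 hℓ).2, real_inner_self_eq_norm_sq, he₁, one_pow]

end ExplicitFrequencies

/-- Non-resonance property of the explicit frequency vectors used to recover
`B_{b(m-b)}`: the only subset `S ⊆ {1,…,m}` with
`Σ_{ℓ∈S} ω_ℓ = Σ_{ℓ∉S} ω_ℓ + ω₀` and `Σ_{ℓ∈S} ‖ω_ℓ‖² = Σ_{ℓ∉S} ‖ω_ℓ‖² + ‖ω₀‖²`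
is `S = {1,…,b}`. -/
theorem explicit_frequencies_nonresonance
    (n : ℕ) (hn : 2 ≤ n) (b m : ℕ) (hb : 2 ≤ b) (hbm : b < m)
    (e₁ e₂ : EuclideanSpace ℝ (Fin n))
    (he₁ : e₁ = EuclideanSpace.single ⟨0, by omega⟩ 1)
    (he₂ : e₂ = EuclideanSpace.single ⟨1, by omega⟩ 1)
    (lam : ℝ)
    (hlam : lam = Real.sqrt (((b : ℝ) * ((b : ℝ) - 1))
      / (((m : ℝ) - (b : ℝ)) + ((m : ℝ) - (b : ℝ)) ^ 2)))
    (ω : ℕ → EuclideanSpace ℝ (Fin n))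
    (hω1 : ω 1 = (-((b : ℝ) - 1)) • e₁)
    (hωmid : ∀ ℓ, 2 ≤ ℓ → ℓ ≤ b → ω ℓ = e₁)
    (hωtail : ∀ ℓ, b + 1 ≤ ℓ → ℓ ≤ m → ω ℓ = lam • e₂)
    (hω0 : ω 0 = (((b : ℝ) - (m : ℝ)) * lam) • e₂) :
    ∀ S : Finset ℕ, S ⊆ Finset.Icc 1 m →
      (∑ ℓ ∈ S, ω ℓ) = (∑ ℓ ∈ Finset.Icc 1 m \ S, ω ℓ) + ω 0 →
      (∑ ℓ ∈ S, ‖ω ℓ‖ ^ 2) = (∑ ℓ ∈ Finset.Icc 1 m \ S, ‖ω ℓ‖ ^ 2) + ‖ω 0‖ ^ 2 →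
      S = Finset.Icc 1 b := by
  intro S hS hvec hnorm
  have hb' : (2 : ℝ) ≤ b := by exact_mod_cast hb
  have hbm' : (b : ℝ) + 1 ≤ m := by exact_mod_cast hbm
  have hlam_pos : 0 < lam := hlam ▸ Real.sqrt_pos.2 (div_pos (by nlinarith) (by nlinarith))
  have hsum : ∑ ℓ ∈ S, ω ℓ = 0 := by
    have h := (sum_eq_sum_sdiff_add_iff_two_nsmul_sum_eq hS ω (ω 0)).1 hvec
    rw [sum_Icc_one_add_eq_zero_of_explicit_frequencies (by omega) hbm.le hω1 hωmid hωtail hω0,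
      two_nsmul, ← two_smul ℝ, smul_eq_zero] at h
    exact h.resolve_left two_ne_zero
  have he₁_norm : ‖e₁‖ = 1 := by simp [he₁]
  rcases eq_empty_or_eq_Icc_of_sum_explicit_frequencies_eq_zero he₁_norm (by simp [he₂])
    (by simp [he₁, he₂, EuclideanSpace.inner_single_left]) (by omega) hlam_pos hω1 hωmid hωtail hS
    hsum with rfl | rfl
  · rw [sum_empty, sdiff_empty] at hnorm
    have hω1_norm : ‖ω 1‖ = b - 1 := by
      rw [hω1, norm_smul, he₁_norm, mul_one, norm_neg, Real.norm_of_nonneg (by linarith)]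
    have := single_le_sum (f := fun ℓ => ‖ω ℓ‖ ^ 2) (fun _ _ => by positivity)
      (mem_Icc.2 ⟨le_rfl, by omega⟩ : 1 ∈ Icc 1 m)
    nlinarith [sq_nonneg ‖ω 0‖]
  · rfl
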